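/- Let R₂ be the weighted graph on 6 vertices in which every vertex has weight 1/6, three pairwise disjoint edges have weight 1/2, and all remaining edges have weight 1. Then R₂ is 𝒦₁₀-free, and d_{K_5}(R₂) > d_{K_5}(R₁) for every weighted graph R₁ on 5 vertices whose edge weights are all 1 except for exactly one edge of weight 1/2. Equivalently, for all real numbers p,q ≥ 0 with 2p + 3q = 1, one has p²q³/2 < 6·(1/6)⁵·(1/4). -/

import Mathlib

open Filter

structure WeightedGraph (V : Type) [Fintype V] where
  vw : V → ℝ
  ew : V → V → ℝ
  vw_nonneg : ∀ v, 0 ≤ vw v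
  vw_le_one : ∀ v, vw v ≤ 1
  vw_sum : ∑ v, vw v = 1
  ew_nonneg : ∀ u v, 0 ≤ ew u v
  ew_le_one : ∀ u v, ew u v ≤ 1
  ew_symm : ∀ u v, ew u v = ew v u
  ew_self : ∀ v, ew v v = 0

namespace WeightedGraph

variable {V : Type} [Fintype V]

/-- The `K_m`-density of a weighted graph. -/
noncomputable def density (R : WeightedGraph V) (m : ℕ) : ℝ :=
  ∑ σ : Fin m → V, (∏ i, R.vw (σ i)) *
    ∏ p ∈ Finset.univ.filter (fun p : Fin m × Fin m => p.1 < p.2), R.ew (σ p.1) (σ p.2)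

/-- The simple graph `R_{>α}` of edges of weight greater than `α`. -/
def gtGraph (R : WeightedGraph V) (α : ℝ) : SimpleGraph V where
  Adj u v := u ≠ v ∧ α < R.ew u v
  symm := by
    constructor
    intro u v h
    refine ⟨h.1.symm, ?_⟩
    rw [R.ew_symm v u]
    exact h.2
  loopless := by constructor; intro v h; exact h.1 rfl

/-- `R` is `𝒦_t`-free. -/
def KtFree (R : WeightedGraph V) (t : ℕ) : Prop :=
  ¬ ∃ S₁ S₂ : Finset V, S₂ ⊆ S₁ ∧ 1 ≤ S₂.card ∧ S₁.card + S₂.card = t ∧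
      (R.gtGraph 0).IsClique (S₁ : Set V) ∧ (R.gtGraph (1/2)).IsClique (S₂ : Set V)

/-- The conditions (A1)–(A5) on a partition function `part`, for a `(b,a)`-partition
with the number of parts `a` implicit in the type of `part`. -/
def IsBAPartition (R : WeightedGraph V) (s : ℕ) {a : ℕ} (part : V → Fin a) : Prop :=
  Function.Surjective part ∧
  (∀ u v : V, u ≠ v → R.ew u v = 1/2 ∨ R.ew u v = 1) ∧
  (∀ u v : V, u ≠ v → (R.ew u v = 1/2 ↔ part u = part v)) ∧
  (∀ u v : V, part u = part v → R.vw u = R.vw v) ∧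
  (∀ i j : Fin a, (Finset.univ.filter fun x => part x = i).card ≤
      (Finset.univ.filter fun x => part x = j).card + 1) ∧
  (∀ u v : V, (Finset.univ.filter fun x => part x = part v).card ≤
      (Finset.univ.filter fun x => part x = part u).card → R.vw u ≤ R.vw v) ∧
  ((a = 1 ∧ ∀ i : Fin a, (Finset.univ.filter fun x => part x = i).card = s) ∨
   (2 ≤ a ∧ ∀ i : Fin a, (Finset.univ.filter fun x => part x = i).card ≤ s - 1))

/-- `R` admits a `(b,a)`-partition (with clique parameter `s`). -/
def AdmitsPartition (R : WeightedGraph V) (s b a : ℕ) : Prop :=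
  Fintype.card V = b ∧ 1 ≤ a ∧ ∃ part : V → Fin a, R.IsBAPartition s part

end WeightedGraph

/-- `π_s(𝒦_t)`: the supremum of the `K_s`-density over all `𝒦_t`-free weighted graphs. -/
noncomputable def piSup (s t : ℕ) : ℝ :=
  sSup {x : ℝ | ∃ (V : Type) (_ : Fintype V) (R : WeightedGraph V),
    R.KtFree t ∧ R.density s = x}

/-- The independence number of a simple graph. -/
noncomputable def indepNum {α : Type*} (G : SimpleGraph α) : ℕ :=
  sSup {k : ℕ | ∃ S : Finset α, (Gᶜ).IsNClique k S}

/-- The number `N(K_s, G)` of `s`-cliques of `G`. -/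
noncomputable def cliqueCount {α : Type*} (G : SimpleGraph α) (s : ℕ) : ℕ :=
  Set.ncard {S : Finset α | G.IsNClique s S}

/-- The Ramsey–Turán number `RT(n, K_s, K_t, ℓ)`. -/
noncomputable def RT (n s t : ℕ) (ℓ : ℝ) : ℕ :=
  sSup {N : ℕ | ∃ G : SimpleGraph (Fin n),
    G.CliqueFree t ∧ ((indepNum G : ℝ) < ℓ) ∧ N = cliqueCount G s}
/-- The weighted graph on 6 vertices with all vertex weights `1/6`, in which the three disjoint
edges `{0,1}, {2,3}, {4,5}` have weight `1/2` and all other edges have weight `1`. -/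
noncomputable def R19 : WeightedGraph (Fin 6) where
  vw := fun _ => 1 / 6
  ew u v := if u = v then 0 else if (u : ℕ) / 2 = (v : ℕ) / 2 then 1/2 else 1
  vw_nonneg v := by norm_num
  vw_le_one v := by norm_num
  vw_sum := by
    simp [Finset.sum_const, Finset.card_univ]
  ew_nonneg u v := by
    try dsimp only
    split
    · norm_num
    · split <;> norm_num
  ew_le_one u v := by
    try dsimp only
    split
    · norm_num
    · split <;> norm_num
  ew_symm u v := by
    try dsimp only
    rcases eq_or_ne u v with h | h
    · simp [h]
    · rw [if_neg h, if_neg (Ne.symm h)]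
      by_cases h2 : (u : ℕ) / 2 = (v : ℕ) / 2
      · rw [if_pos h2, if_pos h2.symm]
      · rw [if_neg h2, if_neg (fun e => h2 e.symm)]
  ew_self v := by simp

/-- All edge weights of `R` equal `1` except for exactly one edge of weight `1/2`. -/
def OneHalfEdge {V : Type} [Fintype V] (R : WeightedGraph V) : Prop :=
  ∃ u v : V, u ≠ v ∧ R.ew u v = 1/2 ∧
    ∀ x y : V, x ≠ y → ¬(x = u ∧ y = v) → ¬(x = v ∧ y = u) → R.ew x y = 1

/-!
In `R19_{>1/2}` the blocks `{0,1}, {2,3}, {4,5}` are independent, so it is 3-colourable: a pair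
`S₂ ⊆ S₁` of cliques has `|S₁| + |S₂| ≤ 6 + 3 < 10`.

In a `K_m`-density only injective maps `σ : Fin m → V` contribute. On five vertices these are the
`5!` bijections, each weighing at most `(1/5)^5 · 1/2` by AM-GM on the vertex weights and because
each hits the half edge. In `R19` the `6!` injections `Fin 5 → Fin 6` each meet at most two half
edges and so weigh at least `(1/6)^5 · 1/4`, and `5!/(2 · 5^5) < 6!/(4 · 6^5)`. The inequality in
`p, q` is AM-GM for `p, p, q, q, q`.
-/

open Finset

theorem Real.prod_le_inv_card_pow_of_sum_eq_one {ι : Type*} [Fintype ι] {f : ι → ℝ}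
    (hf : ∀ i, 0 ≤ f i) (hsum : ∑ i, f i = 1) :
    ∏ i, f i ≤ ((Fintype.card ι : ℝ)⁻¹) ^ Fintype.card ι := by
  set n := Fintype.card ι
  have hn : (0 : ℝ) < n := by
    have : Nonempty ι := by
      by_contra h
      simp [not_nonempty_iff.mp h] at hsum
    exact_mod_cast Fintype.card_pos
  have hP : 0 ≤ ∏ i, f i := prod_nonneg fun i _ => hf i
  have amgm : ∏ i, f i ^ (n : ℝ)⁻¹ ≤ (n : ℝ)⁻¹ := by
    simpa [← mul_sum, hsum] using Real.geom_mean_le_arith_mean_weighted univ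
      (fun _ => (n : ℝ)⁻¹) f (fun _ _ => by positivity) (by simp [n, hn.ne']) fun i _ => hf i
  rw [Real.finsetProd_rpow _ _ fun i _ => hf i] at amgm
  calc ∏ i, f i = ((∏ i, f i) ^ (n : ℝ)⁻¹) ^ n := by
        rw [← Real.rpow_natCast, ← Real.rpow_mul hP, inv_mul_cancel₀ hn.ne', Real.rpow_one]
    _ ≤ (n : ℝ)⁻¹ ^ n := pow_le_pow_left₀ (Real.rpow_nonneg hP _) amgm n

theorem Fintype.card_filter_injective (α β : Type*) [Fintype α] [Fintype β] [DecidableEq α]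
    [DecidableEq β] :
    #{f : α → β | Function.Injective f} = (Fintype.card β).descFactorial (Fintype.card α) := by
  rw [← Fintype.card_embedding_eq, ← Fintype.card_subtype]
  exact Fintype.card_congr (Equiv.subtypeInjectiveEquivEmbedding α β)

theorem Finset.prod_le_of_mem_of_le_one {ι : Type*} [DecidableEq ι] {s : Finset ι} {f : ι → ℝ}
    (h0 : ∀ i ∈ s, 0 ≤ f i) (h1 : ∀ i ∈ s, f i ≤ 1) {j : ι} (hj : j ∈ s) :
    ∏ i ∈ s, f i ≤ f j := by
  rw [← prod_erase_mul s f hj]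
  exact mul_le_of_le_one_left (h0 j hj)
    (prod_le_one (fun i hi => h0 i (mem_of_mem_erase hi)) fun i hi => h1 i (mem_of_mem_erase hi))

theorem two_mul_card_filter_lt_and_eq_le {α B : Type*} [Fintype α] [LinearOrder α] (c : α → B)
    (h : ∀ i j k, c i = c j → c i = c k → i = j ∨ i = k ∨ j = k) [DecidableEq B] :
    2 * #{p : α × α | p.1 < p.2 ∧ c p.1 = c p.2} ≤ Fintype.card α := by
  set T := ({p : α × α | p.1 < p.2 ∧ c p.1 = c p.2} : Finset (α × α))
  have hmem : ∀ p ∈ T, p.1 < p.2 ∧ c p.1 = c p.2 := fun p hp => (mem_filter.mp hp).2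
  have hfst : Set.InjOn Prod.fst (T : Set (α × α)) := by
    intro p hp q hq he
    obtain ⟨hp, hcp⟩ := hmem p hp
    obtain ⟨hq, hcq⟩ := hmem q hq
    rcases h p.1 p.2 q.2 hcp (he ▸ hcq) with h' | h' | h'
    · order
    · order
    · exact Prod.ext he h'
  have hsnd : Set.InjOn Prod.snd (T : Set (α × α)) := by
    intro p hp q hq he
    obtain ⟨hp, hcp⟩ := hmem p hp
    obtain ⟨hq, hcq⟩ := hmem q hq
    rcases h p.2 p.1 q.1 hcp.symm (he ▸ hcq.symm) with h' | h' | h'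
    · order
    · order
    · exact Prod.ext h' he
  have hdisj : Disjoint (T.image Prod.fst) (T.image Prod.snd) := by
    refine disjoint_left.mpr ?_
    simp only [mem_image]
    rintro _ ⟨p, hp, rfl⟩ ⟨q, hq, he⟩
    obtain ⟨hp, hcp⟩ := hmem p hp
    obtain ⟨hq, hcq⟩ := hmem q hq
    rcases h p.1 p.2 q.1 hcp (he ▸ hcq.symm) with h' | h' | h' <;> order
  calc 2 * #T = #(T.image Prod.fst ∪ T.image Prod.snd) := by
        rw [card_union_of_disjoint hdisj, card_image_of_injOn hfst, card_image_of_injOn hsnd]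
        ring
    _ ≤ Fintype.card α := card_le_univ _

namespace WeightedGraph

variable {V : Type} [Fintype V]

theorem ktFree_of_colorable (R : WeightedGraph V) {k t : ℕ}
    (hcol : (R.gtGraph (1/2)).Colorable k) (ht : Fintype.card V + k < t) : R.KtFree t := by
  rintro ⟨S₁, S₂, -, -, hcard, -, hS₂⟩
  have h₁ := card_le_univ S₁
  have h₂ := hS₂.card_le_of_colorable hcol
  omega

def vertexProd (R : WeightedGraph V) {m : ℕ} (σ : Fin m → V) : ℝ :=
  ∏ i, R.vw (σ i)

def edgeProd (R : WeightedGraph V) {m : ℕ} (σ : Fin m → V) : ℝ :=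
  ∏ p ∈ univ.filter (fun p : Fin m × Fin m => p.1 < p.2), R.ew (σ p.1) (σ p.2)

theorem density_eq_sum (R : WeightedGraph V) (m : ℕ) :
    R.density m = ∑ σ : Fin m → V, R.vertexProd σ * R.edgeProd σ := rfl

theorem edgeProd_nonneg (R : WeightedGraph V) {m : ℕ} (σ : Fin m → V) : 0 ≤ R.edgeProd σ :=
  prod_nonneg fun _ _ => R.ew_nonneg _ _

theorem edgeProd_le_ew (R : WeightedGraph V) {m : ℕ} (σ : Fin m → V) {i j : Fin m}
    (hij : i ≠ j) : R.edgeProd σ ≤ R.ew (σ i) (σ j) := by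
  have key : ∀ {a b : Fin m}, a < b → R.edgeProd σ ≤ R.ew (σ a) (σ b) := fun {a b} hab => by
    rw [edgeProd]
    exact prod_le_of_mem_of_le_one (fun _ _ => R.ew_nonneg _ _) (fun _ _ => R.ew_le_one _ _)
      (j := (a, b)) (mem_filter.mpr ⟨mem_univ _, hab⟩)
  rcases hij.lt_or_gt with h | h
  · exact key h
  · exact R.ew_symm (σ i) (σ j) ▸ key h

theorem edgeProd_eq_zero_of_not_injective (R : WeightedGraph V) {m : ℕ} {σ : Fin m → V}
    (hσ : ¬ Function.Injective σ) : R.edgeProd σ = 0 := by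
  obtain ⟨i, j, hσij, hij⟩ := Function.not_injective_iff.mp hσ
  have h := R.edgeProd_le_ew σ hij
  rw [hσij, R.ew_self] at h
  exact h.antisymm (R.edgeProd_nonneg σ)

theorem density_eq_sum_injective [DecidableEq V] (R : WeightedGraph V) (m : ℕ) :
    R.density m = ∑ σ : Fin m → V with Function.Injective σ, R.vertexProd σ * R.edgeProd σ := by
  rw [density_eq_sum, sum_filter_of_ne]
  intro σ _ hne
  by_contra hσ
  exact hne (by rw [R.edgeProd_eq_zero_of_not_injective hσ, mul_zero])

theorem descFactorial_mul_le_density [DecidableEq V] (R : WeightedGraph V) (m : ℕ) {c : ℝ}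
    (hc : ∀ σ : Fin m → V, Function.Injective σ → c ≤ R.vertexProd σ * R.edgeProd σ) :
    (Fintype.card V).descFactorial m * c ≤ R.density m := by
  calc ((Fintype.card V).descFactorial m : ℝ) * c
        = #{σ : Fin m → V | Function.Injective σ} • c := by
        rw [Fintype.card_filter_injective, Fintype.card_fin, nsmul_eq_mul]
    _ ≤ ∑ σ : Fin m → V with Function.Injective σ, R.vertexProd σ * R.edgeProd σ :=
        card_nsmul_le_sum _ _ c fun σ hσ => hc σ (mem_filter.mp hσ).2
    _ = R.density m := (R.density_eq_sum_injective m).symm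

theorem density_card_le (R : WeightedGraph V) {n : ℕ} (hn : Fintype.card V = n) {u v : V}
    (huv : u ≠ v) : R.density n ≤ n.factorial * ((n : ℝ)⁻¹ ^ n * R.ew u v) := by
  classical
  rw [R.density_eq_sum_injective]
  have hterm : ∀ σ ∈ (univ.filter fun σ : Fin n → V => Function.Injective σ),
      R.vertexProd σ * R.edgeProd σ ≤ (n : ℝ)⁻¹ ^ n * R.ew u v := by
    intro σ hσ
    have hbij : Function.Bijective σ := (Fintype.bijective_iff_injective_and_card σ).mpr
      ⟨(mem_filter.mp hσ).2, by simp [hn]⟩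
    have hvert : R.vertexProd σ ≤ (n : ℝ)⁻¹ ^ n := by
      rw [vertexProd, Fintype.prod_bijective σ hbij _ _ fun _ => rfl, ← hn]
      exact Real.prod_le_inv_card_pow_of_sum_eq_one R.vw_nonneg R.vw_sum
    obtain ⟨i, rfl⟩ := hbij.2 u
    obtain ⟨j, rfl⟩ := hbij.2 v
    exact mul_le_mul hvert (R.edgeProd_le_ew σ fun h => huv (h ▸ rfl)) (R.edgeProd_nonneg σ)
      (by positivity)
  have := sum_le_card_nsmul _ _ _ hterm
  rwa [Fintype.card_filter_injective, Fintype.card_fin, hn, Nat.descFactorial_self,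
    nsmul_eq_mul] at this

end WeightedGraph

theorem R19_ew_of_ne {a b : Fin 6} (hab : a ≠ b) :
    R19.ew a b = if (a : ℕ) / 2 = (b : ℕ) / 2 then 1/2 else 1 :=
  if_neg hab

noncomputable def R19.halfColoring : (R19.gtGraph (1/2)).Coloring (Fin 3) :=
  SimpleGraph.Coloring.mk (fun v => ⟨(v : ℕ) / 2, by omega⟩) fun {a b} hab heq => by
    have hw := hab.2
    rw [R19_ew_of_ne hab.1, if_pos (Fin.val_eq_of_eq heq)] at hw
    exact lt_irrefl _ hw

theorem R19_ktFree_ten : R19.KtFree 10 :=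
  R19.ktFree_of_colorable ⟨R19.halfColoring⟩ (by simp)

theorem R19_vertexProd {m : ℕ} (σ : Fin m → Fin 6) : R19.vertexProd σ = (1/6) ^ m := by
  simp [WeightedGraph.vertexProd, R19]

theorem R19_edgeProd {m : ℕ} {σ : Fin m → Fin 6} (hσ : Function.Injective σ) :
    R19.edgeProd σ =
      (1/2) ^ #{p : Fin m × Fin m | p.1 < p.2 ∧ (σ p.1 : ℕ) / 2 = (σ p.2 : ℕ) / 2} := by
  rw [WeightedGraph.edgeProd, prod_congr rfl fun p hp =>
    R19_ew_of_ne (hσ.ne (mem_filter.mp hp).2.ne), prod_ite, prod_const_one, mul_one,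
    prod_const, filter_filter]

-- The half-weight pairs of an injective `σ` form a matching on `Fin m`, since each block
-- `{2k, 2k+1}` of `Fin 6` has only two elements.
theorem R19_one_half_le_pow_edgeProd {m : ℕ} {σ : Fin m → Fin 6} (hσ : Function.Injective σ) :
    (1/2 : ℝ) ^ (m / 2) ≤ R19.edgeProd σ := by
  have hblock : ∀ a b c : Fin 6, (a : ℕ) / 2 = b / 2 → (a : ℕ) / 2 = c / 2 →
      a = b ∨ a = c ∨ b = c := by
    decide
  have hcard := two_mul_card_filter_lt_and_eq_le (fun i => (σ i : ℕ) / 2) fun i j k hij hik =>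
    (hblock _ _ _ hij hik).imp hσ.eq_iff.mp (Or.imp hσ.eq_iff.mp hσ.eq_iff.mp)
  rw [R19_edgeProd hσ]
  exact pow_le_pow_of_le_one (by norm_num) (by norm_num) (by rw [Fintype.card_fin] at hcard; omega)

theorem R19_density_ge (m : ℕ) :
    (6 : ℕ).descFactorial m * ((1/6) ^ m * (1/2) ^ (m / 2)) ≤ R19.density m := by
  simpa using R19.descFactorial_mul_le_density m (c := (1/6) ^ m * (1/2) ^ (m / 2))
    fun σ hσ => by
      rw [R19_vertexProd]
      exact mul_le_mul_of_nonneg_left (R19_one_half_le_pow_edgeProd hσ) (by positivity)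

theorem counterexample_s_five_t_ten :
    R19.KtFree 10 ∧
    (∀ (W : Type) (_ : Fintype W) (R₁ : WeightedGraph W),
      Fintype.card W = 5 → OneHalfEdge R₁ → R₁.density 5 < R19.density 5) ∧
    (∀ p q : ℝ, 0 ≤ p → 0 ≤ q → 2 * p + 3 * q = 1 →
      p ^ 2 * q ^ 3 / 2 < 6 * (1 / 6 : ℝ) ^ 5 * (1 / 4)) := by
  refine ⟨R19_ktFree_ten, fun W _ R₁ hW ⟨u, v, huv, hhalf, _⟩ => ?_, fun p q hp hq h => ?_⟩
  · have hupper := R₁.density_card_le hW huv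
    have hlower := R19_density_ge 5
    rw [hhalf] at hupper
    norm_num [Nat.factorial, Nat.descFactorial] at hupper hlower
    linarith
  · have hamgm := Real.prod_le_inv_card_pow_of_sum_eq_one (f := ![p, p, q, q, q])
      (by simp [Fin.forall_fin_succ, hp, hq]) (by simp [Fin.sum_univ_five]; linarith)
    simp only [Fin.prod_univ_five, Matrix.cons_val_zero, Matrix.cons_val_one, Matrix.cons_val,
      Fintype.card_fin] at hamgm
    norm_num at hamgm ⊢
    linarith
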